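/- arXiv:2302.00177 — 2 statements merged into one kernel-verified Lean document; each statement's English description precedes it below -/
import Mathlib

section
/- Let W : U → ℝ be C¹ on an open set U ⊆ ℝᵏ containing 0, with W(0) = 0, and suppose the Łojasiewicz inequality |∇W(x)|² ≥ |W(x)|^α holds on U for some α ∈ (1,2). Let x : [0,∞) → U be a C¹ solution of x' = -k∇W(x) + γ(x) with k > 0, where γ : U → ℝᵏ satisfies |γ(x)| ≤ c|∇W(x)| for a constant 0 < c < k. If x(τ) → 0 as τ → ∞, then the arclength ∫₀^∞ |x'(τ)| dτ is finite. -/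
/-!
Along the trajectory the energy `f = W ∘ x` decreases at rate at least `(k - c) ‖∇W‖²`, so it is
nonincreasing, tends to `W 0 = 0`, and is therefore nonnegative. With `θ = α / 2 < 1` the
Łojasiewicz inequality `f ^ θ ≤ ‖∇W‖` turns this into `(f ^ (1 - θ))' ≤ -(k - c) (1 - θ) ‖∇W‖`,
so `‖∇W‖` has integral at most `f 0 ^ (1 - θ) / ((k - c) (1 - θ))` over `[0, ∞)`, and the speed
`‖x'‖` is at most `(|k| + c) ‖∇W‖`.
-/

open Real Set MeasureTheory Filter Topology
open scoped InnerProductSpace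

/-- `f` models the energy `W ∘ x` along a trajectory and `u` the gradient norm `‖∇W ∘ x‖`. -/
structure IsLojasiewiczDescent (f f' u : ℝ → ℝ) (a θ : ℝ) : Prop where
  pos : 0 < a
  hasDerivAt : ∀ t, 0 ≤ t → HasDerivAt f (f' t) t
  deriv_le : ∀ t, 0 ≤ t → f' t ≤ -(a * u t ^ 2)
  tendsto : Tendsto f atTop (𝓝 0)
  continuousOn : ContinuousOn u (Ici 0)
  rpow_le : ∀ t, 0 ≤ t → |f t| ^ θ ≤ u t

namespace IsLojasiewiczDescent

variable {f f' u : ℝ → ℝ} {a θ t : ℝ}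

lemma u_nonneg (h : IsLojasiewiczDescent f f' u a θ) (ht : 0 ≤ t) : 0 ≤ u t :=
  (rpow_nonneg (abs_nonneg _) _).trans (h.rpow_le t ht)

lemma antitoneOn (h : IsLojasiewiczDescent f f' u a θ) : AntitoneOn f (Ici 0) := by
  refine antitoneOn_of_hasDerivWithinAt_nonpos (f' := f') (convex_Ici 0)
    (fun t ht => (h.hasDerivAt t ht).continuousAt.continuousWithinAt) (fun t ht => ?_)
    (fun t ht => ?_) <;> rw [interior_Ici] at ht
  · exact (h.hasDerivAt t ht.le).hasDerivWithinAt
  · exact (h.deriv_le t ht.le).trans (neg_nonpos.2 (mul_nonneg h.pos.le (sq_nonneg _)))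

lemma nonneg (h : IsLojasiewiczDescent f f' u a θ) (ht : 0 ≤ t) : 0 ≤ f t :=
  le_of_tendsto h.tendsto <| by
    filter_upwards [eventually_ge_atTop t] with s hs using h.antitoneOn ht (ht.trans hs) hs

lemma eq_zero_of_le {s : ℝ} (h : IsLojasiewiczDescent f f' u a θ) (ht : 0 ≤ t) (hft : f t = 0)
    (hts : t ≤ s) : f s = 0 :=
  le_antisymm (hft ▸ h.antitoneOn ht (ht.trans hts) hts) (h.nonneg (ht.trans hts))

lemma deriv_eq_zero (h : IsLojasiewiczDescent f f' u a θ) (ht : 0 < t) (hft : f t = 0) :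
    f' t = 0 :=
  IsLocalMin.hasDerivAt_eq_zero
    (by filter_upwards [Ioi_mem_nhds ht] with s hs using hft ▸ h.nonneg hs.le)
    (h.hasDerivAt t ht.le)

lemma u_eq_zero (h : IsLojasiewiczDescent f f' u a θ) (ht : 0 < t) (hft : f t = 0) :
    u t = 0 := by
  have hdiss := h.deriv_le t ht.le
  rw [h.deriv_eq_zero ht hft] at hdiss
  exact pow_eq_zero_iff two_ne_zero |>.1 <|
    le_antisymm (nonpos_of_mul_nonpos_right (by linarith) h.pos) (sq_nonneg _)

/-- Where `f t = 0` the energy vanishes from `t` on, so only a right derivative exists. -/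
lemma hasDerivWithinAt_rpow (h : IsLojasiewiczDescent f f' u a θ) (hθ : θ < 1) (ht : 0 < t) :
    HasDerivWithinAt (fun s => f s ^ (1 - θ)) (f' t * (1 - θ) * f t ^ (-θ)) (Ioi t) t := by
  rcases (h.nonneg ht.le).lt_or_eq with hpos | hzero
  · have hderiv := (h.hasDerivAt t ht.le).rpow_const (p := 1 - θ) (Or.inl hpos.ne')
    rw [sub_sub_cancel_left] at hderiv
    exact hderiv.hasDerivWithinAt
  · rw [h.deriv_eq_zero ht hzero.symm, zero_mul, zero_mul]
    refine (hasDerivWithinAt_const t _ 0).congr (fun s hs => ?_) ?_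
    · rw [h.eq_zero_of_le ht.le hzero.symm hs.le, zero_rpow (sub_pos.2 hθ).ne']
    · rw [← hzero, zero_rpow (sub_pos.2 hθ).ne']

lemma deriv_rpow_le (h : IsLojasiewiczDescent f f' u a θ) (hθ : θ < 1) (ht : 0 < t) :
    f' t * (1 - θ) * f t ^ (-θ) ≤ -(a * (1 - θ) * u t) := by
  rcases (h.nonneg ht.le).lt_or_eq with hpos | hzero
  · have hone : 1 ≤ f t ^ (-θ) * u t :=
      calc 1 = f t ^ (-θ) * f t ^ θ := by rw [← rpow_add hpos, neg_add_cancel, rpow_zero]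
        _ ≤ f t ^ (-θ) * u t := by
          gcongr
          simpa only [abs_of_pos hpos] using h.rpow_le t ht.le
    have hcoef : 0 ≤ a * (1 - θ) * u t :=
      mul_nonneg (mul_nonneg h.pos.le (sub_pos.2 hθ).le) (h.u_nonneg ht.le)
    calc f' t * (1 - θ) * f t ^ (-θ) ≤ -(a * u t ^ 2) * (1 - θ) * f t ^ (-θ) := by
          have := sub_pos.2 hθ
          gcongr
          exact h.deriv_le t ht.le
      _ = -(a * (1 - θ) * u t) * (f t ^ (-θ) * u t) := by ring
      _ ≤ -(a * (1 - θ) * u t) := by nlinarith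
  · rw [h.deriv_eq_zero ht hzero.symm, h.u_eq_zero ht hzero.symm]
    simp

lemma integral_le (h : IsLojasiewiczDescent f f' u a θ) (hθ : θ < 1) {T : ℝ} (hT : 0 ≤ T) :
    a * (1 - θ) * ∫ t in (0 : ℝ)..T, u t ≤ f 0 ^ (1 - θ) := by
  have hcont : ContinuousOn (fun t => f t ^ (1 - θ)) (Icc 0 T) :=
    ContinuousOn.rpow_const (fun t ht => (h.hasDerivAt t ht.1).continuousAt.continuousWithinAt)
      fun _ _ => Or.inr (sub_pos.2 hθ).le
  have hint : IntegrableOn (fun t => -(a * (1 - θ) * u t)) (Icc 0 T) :=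
    ((h.continuousOn.mono Icc_subset_Ici_self).integrableOn_Icc.const_mul _).neg
  have hftc := intervalIntegral.sub_le_integral_of_hasDeriv_right_of_le hT hcont
    (fun t ht => h.hasDerivWithinAt_rpow hθ ht.1) hint (fun t ht => h.deriv_rpow_le hθ ht.1)
  rw [intervalIntegral.integral_neg, intervalIntegral.integral_const_mul] at hftc
  linarith [rpow_nonneg (h.nonneg hT) (1 - θ)]

theorem integrableOn_Ioi (h : IsLojasiewiczDescent f f' u a θ) (hθ : θ < 1) :
    IntegrableOn u (Ioi 0) := by
  refine integrableOn_Ioi_of_intervalIntegral_norm_bounded (f 0 ^ (1 - θ) / (a * (1 - θ))) 0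
    (fun T => (h.continuousOn.mono Icc_subset_Ici_self).integrableOn_Icc.mono_set
      Ioc_subset_Icc_self) tendsto_id ?_
  filter_upwards [eventually_ge_atTop 0] with T hT
  rw [intervalIntegral.integral_congr (g := u) fun t ht => ?_,
    le_div_iff₀' (mul_pos h.pos (sub_pos.2 hθ))]
  · exact h.integral_le hθ hT
  · rw [id, uIcc_of_le hT] at ht
    exact norm_of_nonneg (h.u_nonneg ht.1)

end IsLojasiewiczDescent

section PerturbedGradient

variable {E : Type*} [NormedAddCommGroup E] [InnerProductSpace ℝ E] {g γ : E} {k c : ℝ}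

lemma inner_neg_smul_add_le (hγ : ‖γ‖ ≤ c * ‖g‖) :
    ⟪g, -k • g + γ⟫_ℝ ≤ -((k - c) * ‖g‖ ^ 2) := by
  have hγg : ⟪g, γ⟫_ℝ ≤ ‖g‖ * (c * ‖g‖) :=
    (real_inner_le_norm g γ).trans (mul_le_mul_of_nonneg_left hγ (norm_nonneg g))
  rw [inner_add_right, inner_smul_right, real_inner_self_eq_norm_sq]
  linarith

lemma norm_neg_smul_add_le (hγ : ‖γ‖ ≤ c * ‖g‖) : ‖-k • g + γ‖ ≤ (|k| + c) * ‖g‖ :=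
  calc ‖-k • g + γ‖ ≤ ‖-k • g‖ + ‖γ‖ := norm_add_le _ _
    _ ≤ |k| * ‖g‖ + c * ‖g‖ := by rw [norm_smul, norm_neg, Real.norm_eq_abs]; gcongr
    _ = (|k| + c) * ‖g‖ := by ring

lemma HasGradientAt.comp_hasDerivAt [CompleteSpace E] {W : E → ℝ} {x : ℝ → E} {v : E} {t : ℝ}
    (hW : HasGradientAt W g (x t)) (hx : HasDerivAt x v t) :
    HasDerivAt (fun s => W (x s)) ⟪g, v⟫_ℝ t := by
  simpa only [Function.comp_def, InnerProductSpace.toDual_apply_apply] using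
    hW.hasFDerivAt.comp_hasDerivAt t hx

end PerturbedGradient

lemma rpow_div_two_le_of_rpow_le_sq {x y α : ℝ} (hx : 0 ≤ x) (hy : 0 ≤ y) (h : x ^ α ≤ y ^ 2) :
    x ^ (α / 2) ≤ y := by
  rwa [← pow_le_pow_iff_left₀ (rpow_nonneg hx _) hy two_ne_zero, ← rpow_mul_natCast hx,
    Nat.cast_ofNat, div_mul_cancel₀ _ two_ne_zero]

lemma aestronglyMeasurable_restrict_of_hasDerivAt {F : Type*} [NormedAddCommGroup F]
    [NormedSpace ℝ F] [CompleteSpace F] {x v : ℝ → F} {s : Set ℝ} (hs : MeasurableSet s)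
    (hx : ∀ t ∈ s, HasDerivAt x (v t) t) : AEStronglyMeasurable v (volume.restrict s) :=
  (aestronglyMeasurable_deriv x _).congr <|
    (ae_restrict_iff' hs).2 (Eventually.of_forall fun t ht => (hx t ht).deriv)

theorem stmt_3_general {k' : ℕ} (U : Set (EuclideanSpace ℝ (Fin k')))
    (hU : IsOpen U) (h0U : (0 : EuclideanSpace ℝ (Fin k')) ∈ U)
    (W : EuclideanSpace ℝ (Fin k') → ℝ)
    (gradW : EuclideanSpace ℝ (Fin k') → EuclideanSpace ℝ (Fin k'))
    (hgrad : ∀ x ∈ U, HasGradientAt W (gradW x) x)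
    (hgradcont : ContinuousOn gradW U)
    (hW0 : W 0 = 0)
    (α : ℝ) (hα2 : α < 2)
    (hLoj : ∀ x ∈ U, ‖gradW x‖ ^ 2 ≥ |W x| ^ α)
    (k c : ℝ) (hck : c < k)
    (γ : EuclideanSpace ℝ (Fin k') → EuclideanSpace ℝ (Fin k'))
    (hγ : ∀ x ∈ U, ‖γ x‖ ≤ c * ‖gradW x‖)
    (x : ℝ → EuclideanSpace ℝ (Fin k'))
    (hxin : ∀ τ, 0 ≤ τ → x τ ∈ U)
    (hode : ∀ τ, 0 ≤ τ → HasDerivAt x (-k • gradW (x τ) + γ (x τ)) τ)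
    (hlim : Tendsto x atTop (nhds 0)) :
    IntegrableOn (fun τ => ‖-k • gradW (x τ) + γ (x τ)‖) (Ioi 0) := by
  have hdescent : IsLojasiewiczDescent (fun τ => W (x τ))
      (fun τ => ⟪gradW (x τ), -k • gradW (x τ) + γ (x τ)⟫_ℝ) (fun τ => ‖gradW (x τ)‖)
      (k - c) (α / 2) :=
    { pos := sub_pos.2 hck
      hasDerivAt := fun τ hτ => (hgrad _ (hxin τ hτ)).comp_hasDerivAt (hode τ hτ)
      deriv_le := fun τ hτ => inner_neg_smul_add_le (hγ _ (hxin τ hτ))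
      tendsto := by
        simpa only [hW0, Function.comp_def] using (hgrad 0 h0U).differentiableAt.continuousAt.tendsto.comp hlim
      continuousOn := fun τ hτ =>
        ((hgradcont.continuousAt (hU.mem_nhds (hxin τ hτ))).comp
          (hode τ hτ).continuousAt).norm.continuousWithinAt
      rpow_le := fun τ hτ =>
        rpow_div_two_le_of_rpow_le_sq (abs_nonneg _) (norm_nonneg _) (hLoj _ (hxin τ hτ)) }
  have hspeed := aestronglyMeasurable_restrict_of_hasDerivAt measurableSet_Ioi
    fun τ (hτ : 0 < τ) => hode τ hτ.le
  refine ((hdescent.integrableOn_Ioi (by linarith)).const_mul (|k| + c)).mono' hspeed.norm ?_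
  filter_upwards [ae_restrict_mem measurableSet_Ioi] with τ hτ
  rw [norm_norm]
  exact norm_neg_smul_add_le (hγ _ (hxin τ (le_of_lt hτ)))

/-- Łojasiewicz finite-length theorem for a perturbed gradient flow
`x' = -k ∇W(x) + γ(x)`. -/
theorem stmt_3 {k' : ℕ} (U : Set (EuclideanSpace ℝ (Fin k')))
    (hU : IsOpen U) (h0U : (0 : EuclideanSpace ℝ (Fin k')) ∈ U)
    (W : EuclideanSpace ℝ (Fin k') → ℝ)
    (gradW : EuclideanSpace ℝ (Fin k') → EuclideanSpace ℝ (Fin k'))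
    (hgrad : ∀ x ∈ U, HasGradientAt W (gradW x) x)
    (hgradcont : ContinuousOn gradW U)
    (hW0 : W 0 = 0)
    (α : ℝ) (hα1 : 1 < α) (hα2 : α < 2)
    (hLoj : ∀ x ∈ U, ‖gradW x‖ ^ 2 ≥ |W x| ^ α)
    (k c : ℝ) (hk : 0 < k) (hc : 0 < c) (hck : c < k)
    (γ : EuclideanSpace ℝ (Fin k') → EuclideanSpace ℝ (Fin k'))
    (hγ : ∀ x ∈ U, ‖γ x‖ ≤ c * ‖gradW x‖)
    (x : ℝ → EuclideanSpace ℝ (Fin k'))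
    (hxin : ∀ τ, 0 ≤ τ → x τ ∈ U)
    (hode : ∀ τ, 0 ≤ τ → HasDerivAt x (-k • gradW (x τ) + γ (x τ)) τ)
    (hlim : Tendsto x atTop (nhds 0)) :
    IntegrableOn (fun τ => ‖-k • gradW (x τ) + γ (x τ)‖) (Ioi 0) :=
  stmt_3_general U hU h0U W gradW hgrad hgradcont hW0 α hα2 hLoj k c hck γ hγ x hxin hode hlim
end

section
/- Consider the zero-angular-momentum connection form: along a differentiable curve s₁ : [0,∞) → ℂ with s₁(t) ≠ 0, written s₁(t) = ρ(t)e^(iψ(t)), the horizontal lift angle satisfies θ(t) - θ(0) = -∫₀ᵗ ρ(u)² ψ'(u) / (ρ(u)² + 1) du. If ρ(t) = 1/√t (for t ≥ 1) and ψ(t) = ct with c > 0, then ρ(t) → 0 as t → ∞ but θ(t) → -∞; in fact θ(t) - θ(1) ≤ -(c/2)·log t for t ≥ 1. -/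
open Real Filter intervalIntegral

/-! On `t ≥ 1` we have `ρ² = 1/t`, so the integrand `ρ²ψ'/(ρ²+1)` is exactly `c/(t+1)` and
`θ(t) - θ(1) = -c log((t+1)/2)`. Since `(t+1)/2 ≥ √t` (AM–GM), this is at most `-(c/2) log t`,
which tends to `-∞` although `ρ(t) = 1/√t → 0`. -/

lemma inv_sqrt_sq_mul_div_inv_sqrt_sq_add_one {u : ℝ} (hu : 0 < u) (c : ℝ) :
    (1 / √u) ^ 2 * c / ((1 / √u) ^ 2 + 1) = c / (u + 1) := by
  rw [div_pow, one_pow, sq_sqrt hu.le]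
  field_simp
  ring

lemma integral_div_add_one {t : ℝ} (ht : -1 < t) (c : ℝ) :
    ∫ u in (1 : ℝ)..t, c / (u + 1) = c * log ((t + 1) / 2) := by
  simp_rw [div_eq_mul_inv c]
  rw [integral_const_mul, integral_comp_add_right (fun u => u⁻¹),
    integral_inv_of_pos (by norm_num) (by linarith)]
  norm_num

lemma half_mul_log_le_log_add_one_div_two {t : ℝ} (ht : 0 < t) :
    log t / 2 ≤ log ((t + 1) / 2) := by
  have hsqrt : √t ≤ (t + 1) / 2 := by
    nlinarith [sq_nonneg (√t - 1), sq_sqrt ht.le]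
  calc log t / 2 = log √t := by rw [log_sqrt ht.le]
    _ ≤ log ((t + 1) / 2) := log_le_log (sqrt_pos.2 ht) hsqrt

lemma tendsto_atBot_of_le_sub_mul_log {f : ℝ → ℝ} {b k : ℝ} (hk : 0 < k)
    (hf : ∀ᶠ t in atTop, f t ≤ b - k * log t) : Tendsto f atTop atBot :=
  tendsto_atBot_mono' _ hf <| tendsto_atBot_add_const_left _ b <|
    tendsto_neg_atTop_atBot.comp (tendsto_log_atTop.const_mul_atTop hk)

theorem stmt_13_general (θ ρ ψ' : ℝ → ℝ) (c : ℝ) (hc : 0 < c)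
    (hθ : ∀ t, 1 ≤ t →
      HasDerivAt θ (-(ρ t ^ 2 * ψ' t) / (ρ t ^ 2 + 1)) t)
    (hρ : ∀ t, 1 ≤ t → ρ t = 1 / Real.sqrt t)
    (hψ' : ∀ t, 1 ≤ t → ψ' t = c) :
    (∀ t, 1 ≤ t →
        θ t - θ 1 = -∫ u in (1:ℝ)..t, ρ u ^ 2 * ψ' u / (ρ u ^ 2 + 1)) ∧
    Tendsto ρ atTop (nhds 0) ∧
    (∀ t, 1 ≤ t → θ t - θ 1 ≤ -(c / 2) * Real.log t) ∧
    Tendsto θ atTop atBot := by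
  have hintegrand : ∀ u, 1 ≤ u → ρ u ^ 2 * ψ' u / (ρ u ^ 2 + 1) = c / (u + 1) := fun u hu => by
    rw [hρ u hu, hψ' u hu, inv_sqrt_sq_mul_div_inv_sqrt_sq_add_one (by linarith)]
  have hintegral : ∀ t, 1 ≤ t →
      ∫ u in (1:ℝ)..t, ρ u ^ 2 * ψ' u / (ρ u ^ 2 + 1) = c * log ((t + 1) / 2) := fun t ht => by
    rw [integral_congr fun u hu => hintegrand u (Set.uIcc_of_le ht ▸ hu).1,
      integral_div_add_one (by linarith)]
  have hangle : ∀ t, 1 ≤ t → θ t - θ 1 = -(c * log ((t + 1) / 2)) := fun t ht => by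
    have hderiv : ∀ u ∈ Set.uIcc 1 t, HasDerivAt θ (-(c / (u + 1))) u := fun u hu => by
      have hu : 1 ≤ u := (Set.uIcc_of_le ht ▸ hu).1
      simpa only [neg_div, hintegrand u hu] using hθ u hu
    have hcont : ContinuousOn (fun u : ℝ => -(c / (u + 1))) (Set.uIcc 1 t) :=
      (continuousOn_const.div (by fun_prop) fun u hu => by
        linarith [(Set.uIcc_of_le ht ▸ hu).1]).neg
    rw [← integral_eq_sub_of_hasDerivAt hderiv hcont.intervalIntegrable, integral_neg,
      integral_div_add_one (by linarith)]
  have hbound : ∀ t, 1 ≤ t → θ t - θ 1 ≤ -(c / 2) * log t := fun t ht => by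
    nlinarith [hangle t ht, half_mul_log_le_log_add_one_div_two (by linarith : (0:ℝ) < t)]
  refine ⟨fun t ht => by rw [hangle t ht, hintegral t ht], ?_, hbound, ?_⟩
  · refine (tendsto_inv_atTop_zero.comp tendsto_sqrt_atTop).congr' ?_
    filter_upwards [eventually_ge_atTop 1] with t ht
    rw [hρ t ht, Function.comp_apply, one_div]
  · refine tendsto_atBot_of_le_sub_mul_log (b := θ 1) (half_pos hc) ?_
    filter_upwards [eventually_ge_atTop 1] with t ht
    linarith [hbound t ht]

/-- The infinite spin example.  For a horizontal lift the angle satisfies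
`θ' = -ρ²ψ'/(ρ²+1)`, so `θ(t) - θ(1) = -∫₁ᵗ ρ²ψ'/(ρ²+1)`.  For the spiral
`ρ(t) = 1/√t`, `ψ(t) = c t` (`c > 0`), the radius tends to `0` while
`θ(t) - θ(1) ≤ -(c/2) log t`, so `θ(t) → -∞`. -/
theorem stmt_13 (θ ρ ψ ψ' : ℝ → ℝ) (c : ℝ) (hc : 0 < c)
    (hρcont : ContinuousOn ρ (Set.Ici 1))
    (hψ : ∀ t, 1 ≤ t → HasDerivAt ψ (ψ' t) t)
    (hψ'cont : ContinuousOn ψ' (Set.Ici 1))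
    (hθ : ∀ t, 1 ≤ t →
      HasDerivAt θ (-(ρ t ^ 2 * ψ' t) / (ρ t ^ 2 + 1)) t)
    (hρ : ∀ t, 1 ≤ t → ρ t = 1 / Real.sqrt t)
    (hψ' : ∀ t, 1 ≤ t → ψ' t = c) :
    (∀ t, 1 ≤ t →
        θ t - θ 1 = -∫ u in (1:ℝ)..t, ρ u ^ 2 * ψ' u / (ρ u ^ 2 + 1)) ∧
    Tendsto ρ atTop (nhds 0) ∧
    (∀ t, 1 ≤ t → θ t - θ 1 ≤ -(c / 2) * Real.log t) ∧
    Tendsto θ atTop atBot :=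
  stmt_13_general θ ρ ψ' c hc hθ hρ hψ'
end
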